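/- Let H be a Hopf algebra over a commutative ring k with antipode 𝒮, and let π : H → B and i : B → H be Hopf algebra homomorphisms with π ∘ i = id_B. Then the adjoint-type map f : H → H defined by f(h) = Σ i(π(h₁)) 𝒮(h₂) takes values in the coinvariants A = { x ∈ H : Σ x₁ ⊗ π(x₂) = x ⊗ 1_B }, i.e. Σ f(h)₁ ⊗ π(f(h)₂) = f(h) ⊗ 1_B for every h ∈ H. -/

import Mathlib

/-!
Work in the convolution algebra of linear maps `H → H ⊗ B`. The coaction `α = (id ⊗ π) ∘ Δ`
is an algebra map, so `α * (α ∘ 𝒮) = 1`; it factors as `α = ι * ρ` with `ι h = h ⊗ 1` and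
`ρ h = 1 ⊗ π h`, while `(ι ∘ 𝒮) * ι = 1`. Writing `f = (i ∘ π) * 𝒮`,
`ι ∘ f = (ι ∘ i ∘ π) * (ι ∘ 𝒮) * ι * ρ * (α ∘ 𝒮) = ((ι ∘ i ∘ π) * ρ) * (α ∘ 𝒮)`, and
`(ι ∘ i ∘ π) * ρ = α ∘ i ∘ π` because `i ∘ π` is comultiplicative and `π ∘ i = id`.
Hence `ι ∘ f = (α ∘ i ∘ π) * (α ∘ 𝒮) = α ∘ f`.
-/

open TensorProduct

variable {k H B : Type*} [CommRing k] [Ring H] [HopfAlgebra k H]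
  [Ring B] [HopfAlgebra k B]

/-- The adjoint-type map `f(h) = Σ i(π(h₁)) 𝒮(h₂)`. -/
noncomputable def adjMap (π : H →ₐ[k] B) (i : B →ₐ[k] H) : H →ₗ[k] H :=
  LinearMap.mul' k H ∘ₗ
    TensorProduct.map (i.toLinearMap ∘ₗ π.toLinearMap)
      (HopfAlgebra.antipode (R := k) (A := H)) ∘ₗ
    Coalgebra.comul (R := k) (A := H)

open Coalgebra HopfAlgebra WithConv LinearMap
open Algebra.TensorProduct (includeLeft includeRight)

lemma adjMap_eq_convMul (π : H →ₐ[k] B) (i : B →ₐ[k] H) :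
    adjMap π i = (toConv (i.toLinearMap ∘ₗ π.toLinearMap) * toConv (antipode k)).ofConv :=
  rfl

section
variable {R C A D : Type*} [CommSemiring R] [AddCommMonoid C] [Module R C] [Coalgebra R C]
  [Semiring A] [Algebra R A] [Semiring D] [Algebra R D]

lemma toConv_includeLeft_mul_toConv_includeRight (f : C →ₗ[R] A) (g : C →ₗ[R] D) :
    toConv (includeLeft.toLinearMap ∘ₗ f) *
        toConv ((includeRight : D →ₐ[R] A ⊗[R] D).toLinearMap ∘ₗ g) =
      toConv (map f g ∘ₗ comul) := by
  have : mul' R (A ⊗[R] D) ∘ₗ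
      map (includeLeft.toLinearMap ∘ₗ f)
        ((includeRight : D →ₐ[R] A ⊗[R] D).toLinearMap ∘ₗ g) =
      map f g := by
    ext; simp
  rw [LinearMap.convMul_def, ← comp_assoc, this]

end

section
variable {R A D : Type*} [CommSemiring R] [Semiring A] [HopfAlgebra R A]
  [Semiring D] [Algebra R D]

lemma algHom_mul_algHom_comp_antipode (φ : A →ₐ[R] D) :
    toConv φ.toLinearMap * toConv (φ.toLinearMap ∘ₗ antipode R) = 1 := by
  apply ofConv_injective
  rw [← comp_id φ.toLinearMap, comp_assoc, id_comp, ← ofConv_toConv (antipode R),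
    ← ofConv_toConv (LinearMap.id : A →ₗ[R] A), ← algHom_comp_convMul_distrib,
    id_mul_antipode]
  ext; simp

lemma algHom_comp_antipode_mul_algHom (φ : A →ₐ[R] D) :
    toConv (φ.toLinearMap ∘ₗ antipode R) * toConv φ.toLinearMap = 1 := by
  apply ofConv_injective
  rw [← comp_id φ.toLinearMap, comp_assoc, id_comp, ← ofConv_toConv (antipode R),
    ← ofConv_toConv (LinearMap.id : A →ₗ[R] A), ← algHom_comp_convMul_distrib,
    antipode_mul_id]
  ext; simp

end

namespace HopfAlgebra

variable {R A D : Type*} [CommSemiring R] [Semiring A] [HopfAlgebra R A]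
  [Semiring D] [Algebra R D]

variable (R) in
noncomputable def rightCoaction (π : A →ₐ[R] D) : A →ₐ[R] A ⊗[R] D :=
  (Algebra.TensorProduct.map (AlgHom.id R A) π).comp (Bialgebra.comulAlgHom R A)

lemma toLinearMap_rightCoaction (π : A →ₐ[R] D) :
    (rightCoaction R π).toLinearMap = map LinearMap.id π.toLinearMap ∘ₗ comul :=
  rfl

lemma toConv_rightCoaction (π : A →ₐ[R] D) :
    toConv (rightCoaction R π).toLinearMap =
      toConv (includeLeft : A →ₐ[R] A ⊗[R] D).toLinearMap *
        toConv ((includeRight : D →ₐ[R] A ⊗[R] D).toLinearMap ∘ₗ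
          π.toLinearMap) := by
  rw [toLinearMap_rightCoaction, ← toConv_includeLeft_mul_toConv_includeRight, comp_id]

lemma rightCoaction_comp_section [CoalgebraStruct R D] (π : A →ₐ[R] D) (i : D →ₗ[R] A)
    (hπ : map π.toLinearMap π.toLinearMap ∘ₗ comul = comul ∘ₗ π.toLinearMap)
    (hi : map i i ∘ₗ comul = comul ∘ₗ i) (hπi : π.toLinearMap ∘ₗ i = LinearMap.id) :
    (rightCoaction R π).toLinearMap ∘ₗ (i ∘ₗ π.toLinearMap) =
      map (i ∘ₗ π.toLinearMap) π.toLinearMap ∘ₗ comul := by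
  calc (rightCoaction R π).toLinearMap ∘ₗ (i ∘ₗ π.toLinearMap)
      = map LinearMap.id π.toLinearMap ∘ₗ map i i ∘ₗ
          map π.toLinearMap π.toLinearMap ∘ₗ comul := by
        rw [hπ, ← comp_assoc π.toLinearMap comul, hi, toLinearMap_rightCoaction]
        simp only [comp_assoc]
    _ = map (i ∘ₗ π.toLinearMap) ((π.toLinearMap ∘ₗ i) ∘ₗ π.toLinearMap) ∘ₗ comul := by
        simp only [← comp_assoc, ← map_comp, id_comp]
    _ = map (i ∘ₗ π.toLinearMap) π.toLinearMap ∘ₗ comul := by rw [hπi, id_comp]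

theorem rightCoaction_comp_mul_antipode (π : A →ₐ[R] D) (φ : A →ₗ[R] A)
    (hφ : (rightCoaction R π).toLinearMap ∘ₗ φ = map φ π.toLinearMap ∘ₗ comul) :
    (rightCoaction R π).toLinearMap ∘ₗ (toConv φ * toConv (antipode R)).ofConv =
      includeLeft.toLinearMap ∘ₗ (toConv φ * toConv (antipode R)).ofConv := by
  set α := (rightCoaction R π).toLinearMap
  set ι := (includeLeft : A →ₐ[R] A ⊗[R] D).toLinearMap
  set ρ := (includeRight : D →ₐ[R] A ⊗[R] D).toLinearMap ∘ₗ π.toLinearMap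
  have hα : toConv α = toConv ι * toConv ρ := toConv_rightCoaction π
  apply toConv_injective
  symm
  calc toConv (ι ∘ₗ (toConv φ * toConv (antipode R)).ofConv)
      = toConv (ι ∘ₗ φ) * toConv (ι ∘ₗ antipode R) *
          (toConv α * toConv (α ∘ₗ antipode R)) := by
        rw [algHom_comp_convMul_distrib, algHom_mul_algHom_comp_antipode, mul_one]
    _ = toConv (ι ∘ₗ φ) * (toConv (ι ∘ₗ antipode R) * toConv ι) * toConv ρ *
          toConv (α ∘ₗ antipode R) := by
        rw [hα]; simp only [mul_assoc]
    _ = toConv (α ∘ₗ φ) * toConv (α ∘ₗ antipode R) := by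
        rw [algHom_comp_antipode_mul_algHom, mul_one, hφ,
          ← toConv_includeLeft_mul_toConv_includeRight]
    _ = toConv (α ∘ₗ (toConv φ * toConv (antipode R)).ofConv) := by
        rw [algHom_comp_convMul_distrib]

end HopfAlgebra

theorem adjMap_mem_coinvariants_general (π : H →ₐ[k] B) (i : B →ₐ[k] H)
    (hπΔ : TensorProduct.map π.toLinearMap π.toLinearMap ∘ₗ
        Coalgebra.comul (R := k) (A := H) =
      Coalgebra.comul (R := k) (A := B) ∘ₗ π.toLinearMap)
    (hiΔ : TensorProduct.map i.toLinearMap i.toLinearMap ∘ₗ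
        Coalgebra.comul (R := k) (A := B) =
      Coalgebra.comul (R := k) (A := H) ∘ₗ i.toLinearMap)
    (hπi : ∀ b : B, π (i b) = b) :
    ∀ h : H,
      TensorProduct.map (LinearMap.id : H →ₗ[k] H) π.toLinearMap
          (Coalgebra.comul (R := k) (adjMap π i h)) = adjMap π i h ⊗ₜ[k] (1 : B) := by
  have hiπ := rightCoaction_comp_section π i.toLinearMap hπΔ hiΔ (LinearMap.ext hπi)
  intro h
  rw [adjMap_eq_convMul]
  exact congr($(rightCoaction_comp_mul_antipode π _ hiπ) h)

/-- the map `f(h) = Σ i(π(h₁)) 𝒮(h₂)` takes values in the coinvariants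
`{x : Σ x₁ ⊗ π(x₂) = x ⊗ 1}`. -/
theorem adjMap_mem_coinvariants (π : H →ₐ[k] B) (i : B →ₐ[k] H)
    (hπΔ : TensorProduct.map π.toLinearMap π.toLinearMap ∘ₗ
        Coalgebra.comul (R := k) (A := H) =
      Coalgebra.comul (R := k) (A := B) ∘ₗ π.toLinearMap)
    (hπε : Coalgebra.counit (R := k) (A := B) ∘ₗ π.toLinearMap =
      Coalgebra.counit (R := k) (A := H))
    (hiΔ : TensorProduct.map i.toLinearMap i.toLinearMap ∘ₗ
        Coalgebra.comul (R := k) (A := B) =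
      Coalgebra.comul (R := k) (A := H) ∘ₗ i.toLinearMap)
    (hiε : Coalgebra.counit (R := k) (A := H) ∘ₗ i.toLinearMap =
      Coalgebra.counit (R := k) (A := B))
    (hπi : ∀ b : B, π (i b) = b) :
    ∀ h : H,
      TensorProduct.map (LinearMap.id : H →ₗ[k] H) π.toLinearMap
          (Coalgebra.comul (R := k) (adjMap π i h)) = adjMap π i h ⊗ₜ[k] (1 : B) :=
  adjMap_mem_coinvariants_general π i hπΔ hiΔ hπi
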